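/- arXiv:2506.16261 — 4 statements merged into one kernel-verified Lean document; each statement's English description precedes it below -/
import Mathlib

section
/- Let u : [0,R] → ℝ be continuously differentiable with u(0) = 0. Then for every r ∈ [0,R], u(r)² ≤ (1/(2π)) · 2π ∫₀^r (u'(s) + u(s)/s)² s ds, i.e. u(r)² ≤ ∫₀^r (u'(s) + u(s)/s)² s ds. (Key step: 2 u u' = 2 (u/s) u' s ≤ (u' + u/s)² s pointwise.) -/
open Set intervalIntegral

/-! Since `u 0 = 0`, `u(r)² = ∫₀^r 2 u u'`, and pointwise
`(u' + u/s)² s - 2 u u' = s (u'² + (u/s)²) ≥ 0`. Writing `u/s = v` keeps every integrand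
continuous on `[0, r]`; the stated integrand agrees with `(u' + v)² s` off the endpoints. -/

lemma two_mul_mul_le_sq_add_mul {s v d : ℝ} (hs : 0 ≤ s) :
    2 * (s * v) * d ≤ (d + v) ^ 2 * s := by
  nlinarith [mul_nonneg hs (add_nonneg (sq_nonneg d) (sq_nonneg v))]

lemma ContDiffOn.hasDerivAt_derivWithin_Icc {u : ℝ → ℝ} {a b x : ℝ}
    (hu : ContDiffOn ℝ 1 u (Icc a b)) (hx : x ∈ Ioo a b) :
    HasDerivAt u (derivWithin u (Icc a b) x) x :=
  ((hu.differentiableOn one_ne_zero) x (Ioo_subset_Icc_self hx)).hasDerivWithinAt.hasDerivAt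
    (Icc_mem_nhds hx.1 hx.2)

lemma integral_two_mul_mul_eq_sq_sub {u D : ℝ → ℝ} {a b : ℝ} (hab : a ≤ b)
    (hu : ContinuousOn u (Icc a b)) (hD : ContinuousOn D (Icc a b))
    (hderiv : ∀ x ∈ Ioo a b, HasDerivAt u (D x) x) :
    ∫ x in a..b, 2 * u x * D x = u b ^ 2 - u a ^ 2 :=
  integral_eq_sub_of_hasDerivAt_of_le hab (hu.pow 2)
    (fun x hx => by simpa [mul_comm] using (hderiv x hx).pow 2)
    (((continuousOn_const.mul hu).mul hD).intervalIntegrable_of_Icc hab)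

/-- For `u ∈ C¹([0,R])` with `u 0 = 0` (and `u s = s · v s` for a
continuous `v`, so that `u s / s` extends continuously at `0`), one has
`u(r)² ≤ ∫₀^r (u'(s) + u(s)/s)² s ds` for every `r ∈ [0,R]`. -/
theorem stmt0 (R : ℝ) (hR : 0 < R) (u v : ℝ → ℝ)
    (hu : ContDiffOn ℝ 1 u (Icc 0 R)) (hu0 : u 0 = 0)
    (hv : ContinuousOn v (Icc 0 R)) (huv : ∀ s ∈ Icc 0 R, u s = s * v s) :
    ∀ r ∈ Icc (0:ℝ) R,
      (u r) ^ 2 ≤ ∫ s in (0:ℝ)..r, (deriv u s + u s / s) ^ 2 * s := by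
  intro r hr
  have hsub : Icc 0 r ⊆ Icc 0 R := Icc_subset_Icc_right hr.2
  set D := derivWithin u (Icc 0 R)
  have hD : ContinuousOn D (Icc 0 r) :=
    (hu.continuousOn_derivWithin (uniqueDiffOn_Icc hR) le_rfl).mono hsub
  have hderiv : ∀ x ∈ Ioo 0 r, HasDerivAt u (D x) x := fun x hx =>
    hu.hasDerivAt_derivWithin_Icc (Ioo_subset_Ioo_right hr.2 hx)
  have hintegrand : EqOn (fun s => (D s + v s) ^ 2 * s)
      (fun s => (deriv u s + u s / s) ^ 2 * s) (Ioo 0 r) := fun s hs => by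
    dsimp only
    rw [(hderiv s hs).deriv, huv s (hsub (Ioo_subset_Icc_self hs)),
      mul_div_cancel_left₀ _ hs.1.ne']
  calc u r ^ 2 = ∫ s in (0:ℝ)..r, 2 * u s * D s := by
        rw [integral_two_mul_mul_eq_sq_sub hr.1 (hu.continuousOn.mono hsub) hD hderiv, hu0]
        ring
    _ ≤ ∫ s in (0:ℝ)..r, (D s + v s) ^ 2 * s :=
        integral_mono_on hr.1
          (((continuousOn_const.mul (hu.continuousOn.mono hsub)).mul hD).intervalIntegrable_of_Icc
            hr.1)
          ((((hD.add (hv.mono hsub)).pow 2).mul continuousOn_id).intervalIntegrable_of_Icc hr.1)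
          fun s hs => by
            rw [huv s (hsub hs)]
            exact two_mul_mul_le_sq_add_mul hs.1
    _ = _ := integral_congr_Ioo_of_le hr.1 hintegrand
end

section
/- For real numbers a, b with a ≥ 0 and b > 0, the pointwise inequality 2ab ≤ (a+b)² holds, and consequently for a radially symmetric vector field u(x) = u_r(r) e_r + u_θ(r) e_θ on the disk B_R vanishing at the origin and boundary, ‖u‖_{L^∞} ≤ (1/√(2π)) ‖∇u‖_{L²}, where ‖∇u‖²_{L²} = 2π ∫₀^R [ (∂_r u_r)² + (∂_r u_θ)² + u_r²/r² + u_θ²/r² ] r dr. -/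
/-!
Each component `u` vanishes at the origin, so `u(r)² = ∫₀^r 2 u u' ds`. Writing `u = s v` turns the
integrand into `2 v u' s ≤ (u'² + v²) s = (u'² + u²/s²) s`, and the last integrand is nonnegative, so
`u(r)²` is bounded by the full weighted energy `∫₀^R (u'² + u²/s²) s ds`. Summing the two components
and taking square roots gives the bound; the factor `2π` cancels.

The derivative is taken within `[0, R]`, where it is continuous; it agrees with `deriv` on `(0, R)`,
which is all the integrals see.
-/

open Set Real MeasureTheory intervalIntegral

section RadialComponent

variable {u v : ℝ → ℝ} {a b R r s : ℝ}

lemma integral_two_mul_derivWithin_Icc (hab : a < b) (hu : ContDiffOn ℝ 1 u (Icc a b))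
    (hr : r ∈ Icc a b) :
    ∫ s in a..r, 2 * u s * derivWithin u (Icc a b) s = u r ^ 2 - u a ^ 2 := by
  have hsub : Icc a r ⊆ Icc a b := Icc_subset_Icc le_rfl hr.2
  have hu' : ContinuousOn (derivWithin u (Icc a b)) (Icc a b) :=
    hu.continuousOn_derivWithin (uniqueDiffOn_Icc hab) le_rfl
  refine integral_eq_sub_of_hasDerivAt_of_le hr.1 ((hu.continuousOn.mono hsub).pow 2) ?_ ?_
  · intro s hs
    have hnhds : Icc a b ∈ nhds s := Icc_mem_nhds hs.1 (hs.2.trans_le hr.2)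
    have hderiv : HasDerivAt u (derivWithin u (Icc a b) s) s := by
      rw [derivWithin_of_mem_nhds hnhds]
      exact ((hu.differentiableOn one_ne_zero).differentiableAt hnhds).hasDerivAt
    simpa using hderiv.pow 2
  · exact (((continuousOn_const.mul hu.continuousOn).mul hu').mono hsub).intervalIntegrable_of_Icc
      hr.1

lemma continuousOn_derivWithin_sq_add_sq_mul (hR : 0 < R) (hu : ContDiffOn ℝ 1 u (Icc 0 R))
    (hv : ContinuousOn v (Icc 0 R)) :
    ContinuousOn (fun s => (derivWithin u (Icc 0 R) s ^ 2 + v s ^ 2) * s) (Icc 0 R) :=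
  (((hu.continuousOn_derivWithin (uniqueDiffOn_Icc hR) le_rfl).pow 2).add (hv.pow 2)).mul
    continuousOn_id

lemma sq_le_integral_derivWithin_sq_add_sq_mul (hR : 0 < R) (hu : ContDiffOn ℝ 1 u (Icc 0 R))
    (hu0 : u 0 = 0) (hv : ContinuousOn v (Icc 0 R)) (huv : ∀ s ∈ Icc 0 R, u s = s * v s)
    (hr : r ∈ Icc 0 R) :
    u r ^ 2 ≤ ∫ s in (0:ℝ)..R, (derivWithin u (Icc 0 R) s ^ 2 + v s ^ 2) * s := by
  set g := derivWithin u (Icc 0 R)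
  have hg : ContinuousOn g (Icc 0 R) := hu.continuousOn_derivWithin (uniqueDiffOn_Icc hR) le_rfl
  have hG := continuousOn_derivWithin_sq_add_sq_mul hR hu hv
  have hsub : Icc 0 r ⊆ Icc 0 R := Icc_subset_Icc le_rfl hr.2
  have hamgm : ∀ s ∈ Icc 0 r, 2 * u s * g s ≤ (g s ^ 2 + v s ^ 2) * s := by
    intro s hs
    rw [huv s (hsub hs)]
    nlinarith [mul_nonneg hs.1 (sq_nonneg (v s - g s))]
  calc u r ^ 2 = ∫ s in (0:ℝ)..r, 2 * u s * g s := by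
        rw [integral_two_mul_derivWithin_Icc hR hu hr, hu0]; ring
    _ ≤ ∫ s in (0:ℝ)..r, (g s ^ 2 + v s ^ 2) * s := by
        refine integral_mono_on hr.1 ?_ ((hG.mono hsub).intervalIntegrable_of_Icc hr.1) hamgm
        exact (((continuousOn_const.mul hu.continuousOn).mul hg).mono hsub).intervalIntegrable_of_Icc
          hr.1
    _ ≤ ∫ s in (0:ℝ)..R, (g s ^ 2 + v s ^ 2) * s := by
        refine integral_mono_interval le_rfl hr.1 hr.2 ?_ (hG.intervalIntegrable_of_Icc hR.le)
        refine (ae_restrict_iff' measurableSet_Ioc).2 (ae_of_all _ fun s hs => ?_)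
        exact mul_nonneg (by positivity) hs.1.le

lemma deriv_sq_add_sq_div_sq_eq (huv : ∀ s ∈ Icc 0 R, u s = s * v s) (hs : s ∈ Ioo 0 R) :
    deriv u s ^ 2 + u s ^ 2 / s ^ 2 = derivWithin u (Icc 0 R) s ^ 2 + v s ^ 2 := by
  rw [derivWithin_of_mem_nhds (Icc_mem_nhds hs.1 hs.2), huv s (Ioo_subset_Icc_self hs)]
  field_simp [hs.1.ne']

end RadialComponent

theorem stmt1_general (R : ℝ) (hR : 0 < R) (ur uθ vr vθ : ℝ → ℝ)
    (hur : ContDiffOn ℝ 1 ur (Icc 0 R)) (huθ : ContDiffOn ℝ 1 uθ (Icc 0 R))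
    (hur0 : ur 0 = 0) (huθ0 : uθ 0 = 0)
    (hvr : ContinuousOn vr (Icc 0 R)) (hvθ : ContinuousOn vθ (Icc 0 R))
    (hurv : ∀ s ∈ Icc 0 R, ur s = s * vr s)
    (huθv : ∀ s ∈ Icc 0 R, uθ s = s * vθ s) :
    (∀ a b : ℝ, 0 ≤ a → 0 < b → 2 * a * b ≤ (a + b) ^ 2) ∧
    ∀ r ∈ Icc (0:ℝ) R,
      Real.sqrt ((ur r) ^ 2 + (uθ r) ^ 2) ≤
        (1 / Real.sqrt (2 * π)) *
          Real.sqrt (2 * π * ∫ s in (0:ℝ)..R,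
            ((deriv ur s) ^ 2 + (deriv uθ s) ^ 2 +
              (ur s) ^ 2 / s ^ 2 + (uθ s) ^ 2 / s ^ 2) * s) := by
  refine ⟨fun a b _ _ => by nlinarith [sq_nonneg a, sq_nonneg b], fun r hr => ?_⟩
  have henergy : ∫ s in (0:ℝ)..R, ((deriv ur s) ^ 2 + (deriv uθ s) ^ 2 +
        (ur s) ^ 2 / s ^ 2 + (uθ s) ^ 2 / s ^ 2) * s =
      (∫ s in (0:ℝ)..R, (derivWithin ur (Icc 0 R) s ^ 2 + vr s ^ 2) * s) +
        ∫ s in (0:ℝ)..R, (derivWithin uθ (Icc 0 R) s ^ 2 + vθ s ^ 2) * s := by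
    rw [← integral_add
      ((continuousOn_derivWithin_sq_add_sq_mul hR hur hvr).intervalIntegrable_of_Icc hR.le)
      ((continuousOn_derivWithin_sq_add_sq_mul hR huθ hvθ).intervalIntegrable_of_Icc hR.le)]
    refine integral_congr_Ioo_of_le hR.le fun s hs => ?_
    simp only [← deriv_sq_add_sq_div_sq_eq hurv hs, ← deriv_sq_add_sq_div_sq_eq huθv hs]
    ring
  rw [henergy, sqrt_mul (by positivity : (0:ℝ) ≤ 2 * π), ← mul_assoc,
    one_div_mul_cancel (by positivity), one_mul]
  exact sqrt_le_sqrt (add_le_add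
    (sq_le_integral_derivWithin_sq_add_sq_mul hR hur hur0 hvr hurv hr)
    (sq_le_integral_derivWithin_sq_add_sq_mul hR huθ huθ0 hvθ huθv hr))

/-- the pointwise inequality `2ab ≤ (a+b)²` for `a ≥ 0`, `b > 0`, and
the resulting `L^∞`–`L²` bound `‖u‖_∞ ≤ (2π)^{-1/2} ‖∇u‖_{L²}` for a radially
symmetric vector field `u = u_r e_r + u_θ e_θ` on the disk `B_R` vanishing at the
origin and on the boundary, where
`‖∇u‖²_{L²} = 2π ∫₀^R [(∂_r u_r)² + (∂_r u_θ)² + u_r²/r² + u_θ²/r²] r dr`. -/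
theorem stmt1 (R : ℝ) (hR : 0 < R) (ur uθ vr vθ : ℝ → ℝ)
    (hur : ContDiffOn ℝ 1 ur (Icc 0 R)) (huθ : ContDiffOn ℝ 1 uθ (Icc 0 R))
    (hur0 : ur 0 = 0) (huθ0 : uθ 0 = 0) (hurR : ur R = 0) (huθR : uθ R = 0)
    (hvr : ContinuousOn vr (Icc 0 R)) (hvθ : ContinuousOn vθ (Icc 0 R))
    (hurv : ∀ s ∈ Icc 0 R, ur s = s * vr s)
    (huθv : ∀ s ∈ Icc 0 R, uθ s = s * vθ s) :
    (∀ a b : ℝ, 0 ≤ a → 0 < b → 2 * a * b ≤ (a + b) ^ 2) ∧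
    ∀ r ∈ Icc (0:ℝ) R,
      Real.sqrt ((ur r) ^ 2 + (uθ r) ^ 2) ≤
        (1 / Real.sqrt (2 * π)) *
          Real.sqrt (2 * π * ∫ s in (0:ℝ)..R,
            ((deriv ur s) ^ 2 + (deriv uθ s) ^ 2 +
              (ur s) ^ 2 / s ^ 2 + (uθ s) ^ 2 / s ^ 2) * s) :=
  stmt1_general R hR ur uθ vr vθ hur huθ hur0 huθ0 hvr hvθ hurv huθv
end

section
/- (Zlotnik's inequality) Let y ∈ W^{1,1}(0,T) satisfy y'(t) = g(y(t)) + h'(t) on [0,T] with y(0) = y⁰, where g : ℝ → ℝ is continuous with g(ζ) → -∞ as ζ → ∞, and h ∈ W^{1,1}(0,T). Suppose there are constants N₀ ≥ 0, N₁ ≥ 0 with h(t₂) - h(t₁) ≤ N₀ + N₁(t₂ - t₁) for all 0 ≤ t₁ < t₂ ≤ T. If ζ̃ is a constant such that g(ζ) ≤ -N₁ for all ζ ≥ ζ̃, then y(t) ≤ max{y⁰, ζ̃} + N₀ for all t ∈ [0,T]. -/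
open Set Filter

/-!
Let `M = max (y 0) ζ̃` and suppose `M < y t`. Going back from `t` to the last time `t₁` with
`y t₁ ≤ M`, the solution stays above `ζ̃` on `(t₁, t]`, so there `y' = g(y) + h' ≤ h' - N₁`.
Integrating over `[t₁, t]` gives `y t - y t₁ ≤ h t - h t₁ - N₁ (t - t₁) ≤ N₀`.
-/

theorem ContinuousOn.exists_mem_Ico_le_forall_Ioc_lt {f : ℝ → ℝ} {a b M : ℝ}
    (hab : a ≤ b) (hf : ContinuousOn f (Icc a b)) (ha : f a ≤ M) (hb : M < f b) :
    ∃ c ∈ Ico a b, f c ≤ M ∧ ∀ s ∈ Ioc c b, M < f s := by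
  obtain ⟨c, ⟨hc, hfc⟩, hc_max⟩ :=
    (isCompact_Icc.of_isClosed_subset (hf.preimage_isClosed_of_isClosed isClosed_Icc isClosed_Iic)
      inter_subset_left).exists_isGreatest ⟨a, ⟨left_mem_Icc.2 hab, ha⟩⟩
  refine ⟨c, ⟨hc.1, hc.2.lt_of_ne ?_⟩, hfc, fun s hs => ?_⟩
  · rintro rfl
    exact hb.not_ge hfc
  · by_contra! hfs
    exact hs.1.not_ge (hc_max ⟨⟨hc.1.trans hs.1.le, hs.2⟩, hfs⟩)

theorem sub_le_sub_of_hasDerivWithinAt_le {f g f' g' : ℝ → ℝ} {a b : ℝ} (hab : a ≤ b)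
    (hf : ∀ x ∈ Icc a b, HasDerivWithinAt f (f' x) (Icc a b) x)
    (hg : ∀ x ∈ Icc a b, HasDerivWithinAt g (g' x) (Icc a b) x)
    (hle : ∀ x ∈ Ioo a b, f' x ≤ g' x) :
    f b - f a ≤ g b - g a := by
  have hderiv : ∀ x ∈ interior (Icc a b),
      HasDerivWithinAt (f - g) (f' x - g' x) (interior (Icc a b)) x := by
    rw [interior_Icc]
    exact fun x hx => ((hf x (Ioo_subset_Icc_self hx)).sub
      (hg x (Ioo_subset_Icc_self hx))).mono Ioo_subset_Icc_self
  have hanti : AntitoneOn (f - g) (Icc a b) :=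
    antitoneOn_of_hasDerivWithinAt_nonpos (convex_Icc a b)
      (fun x hx => ((hf x hx).sub (hg x hx)).continuousWithinAt) hderiv
      (by simpa only [interior_Icc, sub_nonpos] using hle)
  have := hanti (left_mem_Icc.2 hab) (right_mem_Icc.2 hab) hab
  simp only [Pi.sub_apply] at this
  linarith

theorem stmt3_general (T : ℝ) (y h g : ℝ → ℝ) (h' : ℝ → ℝ)
    (hy : ∀ t ∈ Icc 0 T, HasDerivWithinAt y (g (y t) + h' t) (Icc 0 T) t)
    (hh : ∀ t ∈ Icc 0 T, HasDerivWithinAt h (h' t) (Icc 0 T) t)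
    (N₀ N₁ : ℝ) (hN₀ : 0 ≤ N₀)
    (hinc : ∀ t₁ t₂ : ℝ, 0 ≤ t₁ → t₁ < t₂ → t₂ ≤ T →
      h t₂ - h t₁ ≤ N₀ + N₁ * (t₂ - t₁))
    (ζt : ℝ) (hζ : ∀ ζ : ℝ, ζt ≤ ζ → g ζ ≤ -N₁) :
    ∀ t ∈ Icc 0 T, y t ≤ max (y 0) ζt + N₀ := by
  intro t ⟨ht0, htT⟩
  set M := max (y 0) ζt
  rcases le_or_gt (y t) M with hyt | hyt
  · linarith
  have hsub : Icc 0 t ⊆ Icc 0 T := Icc_subset_Icc_right htT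
  obtain ⟨t₁, ⟨ht₁0, ht₁t⟩, hyt₁, habove⟩ :=
    ContinuousOn.exists_mem_Ico_le_forall_Ioc_lt ht0
      (fun s hs => ((hy s (hsub hs)).mono hsub).continuousWithinAt) (le_max_left _ _) hyt
  have hsub₁ : Icc t₁ t ⊆ Icc 0 T := Icc_subset_Icc ht₁0 htT
  have hdrift : y t - y t₁ ≤ (h t - N₁ * t) - (h t₁ - N₁ * t₁) := by
    refine sub_le_sub_of_hasDerivWithinAt_le ht₁t.le (g' := fun s => h' s - N₁ * 1)
      (fun s hs => (hy s (hsub₁ hs)).mono hsub₁)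
      (fun s hs => ((hh s (hsub₁ hs)).mono hsub₁).sub ((hasDerivWithinAt_id s _).const_mul N₁))
      fun s hs => ?_
    have := hζ (y s) ((le_max_right _ _).trans (habove s (Ioo_subset_Ioc_self hs)).le)
    linarith
  linarith [hinc t₁ t ht₁0 ht₁t htT]

/-- Zlotnik's inequality: if `y' = g(y) + h'` on `[0,T]`, `g` is
continuous with `g(ζ) → -∞` as `ζ → ∞`, the increments of `h` satisfy
`h(t₂) - h(t₁) ≤ N₀ + N₁(t₂ - t₁)`, and `g(ζ) ≤ -N₁` for all `ζ ≥ ζ̃`, then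
`y(t) ≤ max {y(0), ζ̃} + N₀` on `[0,T]`. -/
theorem stmt3 (T : ℝ) (hT : 0 < T) (y h g : ℝ → ℝ) (h' : ℝ → ℝ)
    (hg : Continuous g) (hgtop : Tendsto g atTop atBot)
    (hy : ∀ t ∈ Icc 0 T, HasDerivWithinAt y (g (y t) + h' t) (Icc 0 T) t)
    (hh : ∀ t ∈ Icc 0 T, HasDerivWithinAt h (h' t) (Icc 0 T) t)
    (N₀ N₁ : ℝ) (hN₀ : 0 ≤ N₀) (hN₁ : 0 ≤ N₁)
    (hinc : ∀ t₁ t₂ : ℝ, 0 ≤ t₁ → t₁ < t₂ → t₂ ≤ T →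
      h t₂ - h t₁ ≤ N₀ + N₁ * (t₂ - t₁))
    (ζt : ℝ) (hζ : ∀ ζ : ℝ, ζt ≤ ζ → g ζ ≤ -N₁) :
    ∀ t ∈ Icc 0 T, y t ≤ max (y 0) ζt + N₀ :=
  stmt3_general T y h g h' hy hh N₀ N₁ hN₀ hinc ζt hζ
end

section
/- Let γ > 1. For each fixed ρ_s > 0 there exists a constant c = c(γ, ρ_s) > 0 such that for all ρ ≥ 0, (ρ^γ - ρ_s^γ)(ρ - ρ_s) ≥ c (ρ^{γ-1} + 1)·(ρ - ρ_s)². -/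
/-- for `γ > 1` and each fixed `ρ_s > 0` there is `c = c(γ, ρ_s) > 0`
with `(ρ^γ - ρ_s^γ)(ρ - ρ_s) ≥ c (ρ^{γ-1} + 1)(ρ - ρ_s)²` for all `ρ ≥ 0`. -/
theorem stmt6 (γ : ℝ) (hγ : 1 < γ) :
    ∀ ρs : ℝ, 0 < ρs → ∃ c > (0:ℝ), ∀ ρ : ℝ, 0 ≤ ρ →
      (ρ ^ γ - ρs ^ γ) * (ρ - ρs) ≥ c * (ρ ^ (γ - 1) + 1) * (ρ - ρs) ^ 2 := by
  intro ρs hρs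
  set A : ℝ := ρs ^ (γ - 1) with hA
  have hA0 : 0 < A := Real.rpow_pos_of_pos hρs _
  have hA1 : 0 < A + 1 := by linarith
  refine ⟨A / (A + 1), div_pos hA0 hA1, ?_⟩
  intro ρ hρ
  have hγ1 : (0:ℝ) < γ - 1 := by linarith
  have hρsγ : ρs ^ γ = A * ρs := by
    rw [hA, ← Real.rpow_add_one (ne_of_gt hρs)]; ring_nf
  have hργ : ρ ^ γ = ρ ^ (γ - 1) * ρ := by
    rcases eq_or_lt_of_le hρ with h0 | h0
    · rw [← h0, Real.zero_rpow (by linarith : γ ≠ 0),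
        Real.zero_rpow (ne_of_gt hγ1)]; ring
    · rw [← Real.rpow_add_one (ne_of_gt h0)]; ring_nf
  rcases le_or_gt ρs ρ with hc | hc
  · -- ρ ≥ ρs
    have hAρ : A ≤ ρ ^ (γ - 1) :=
      Real.rpow_le_rpow (le_of_lt hρs) hc (le_of_lt hγ1)
    have key1 : ρ ^ (γ - 1) * (ρ - ρs) ≤ ρ ^ γ - ρs ^ γ := by
      rw [hργ, hρsγ]
      nlinarith [Real.rpow_nonneg hρ (γ - 1)]
    have key2 : A / (A + 1) * (ρ ^ (γ - 1) + 1) ≤ ρ ^ (γ - 1) := by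
      rw [div_mul_eq_mul_div, div_le_iff₀ hA1]
      nlinarith
    have hsub : 0 ≤ ρ - ρs := by linarith
    have : A / (A + 1) * (ρ ^ (γ - 1) + 1) * (ρ - ρs) ≤ (ρ ^ γ - ρs ^ γ) := by
      calc A / (A + 1) * (ρ ^ (γ - 1) + 1) * (ρ - ρs)
          ≤ ρ ^ (γ - 1) * (ρ - ρs) := mul_le_mul_of_nonneg_right key2 hsub
        _ ≤ ρ ^ γ - ρs ^ γ := key1
    have := mul_le_mul_of_nonneg_right this hsub
    calc A / (A + 1) * (ρ ^ (γ - 1) + 1) * (ρ - ρs) ^ 2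
        = A / (A + 1) * (ρ ^ (γ - 1) + 1) * (ρ - ρs) * (ρ - ρs) := by ring
      _ ≤ (ρ ^ γ - ρs ^ γ) * (ρ - ρs) := this
  · -- ρ < ρs
    have hAρ : ρ ^ (γ - 1) ≤ A :=
      Real.rpow_le_rpow hρ (le_of_lt hc) (le_of_lt hγ1)
    have key1 : ρ ^ γ - ρs ^ γ ≤ A * (ρ - ρs) := by
      rw [hργ, hρsγ]
      nlinarith
    have key2 : A / (A + 1) * (ρ ^ (γ - 1) + 1) ≤ A := by
      rw [div_mul_eq_mul_div, div_le_iff₀ hA1]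
      nlinarith [Real.rpow_nonneg hρ (γ - 1)]
    have hsub : ρ - ρs ≤ 0 := by linarith
    have : ρ ^ γ - ρs ^ γ ≤ A / (A + 1) * (ρ ^ (γ - 1) + 1) * (ρ - ρs) := by
      calc ρ ^ γ - ρs ^ γ ≤ A * (ρ - ρs) := key1
        _ ≤ A / (A + 1) * (ρ ^ (γ - 1) + 1) * (ρ - ρs) :=
            mul_le_mul_of_nonpos_right key2 hsub
    have := mul_le_mul_of_nonpos_right this hsub
    calc A / (A + 1) * (ρ ^ (γ - 1) + 1) * (ρ - ρs) ^ 2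
        = A / (A + 1) * (ρ ^ (γ - 1) + 1) * (ρ - ρs) * (ρ - ρs) := by ring
      _ ≤ (ρ ^ γ - ρs ^ γ) * (ρ - ρs) := this
end
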